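/- Fix n ≥ 3 and i < j in {1,…,n}. If β and β′ are words in the generators of G_{n,p}^2 representing the same element of G_{n,p}^2, then w^p_{ij}(β) = w^p_{ij}(β′) in F_n^2. In other words, w^p_{ij} : G_{n,p}^2 → F_n^2 is well defined. -/

import Mathlib

namespace GnkBrunnian

/-! ## Index types for generators -/

/-- Validity of a pair index: `1 ≤ i < j ≤ n`. -/
abbrev P2ok (n : ℕ) (p : ℕ × ℕ) : Prop := 1 ≤ p.1 ∧ p.1 < p.2 ∧ p.2 ≤ n

/-- Index type for the generators `a_{ij}` of `G_n^2` (and `b_{ij}` of `PB_n`). -/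
abbrev PIdx (n : ℕ) := {p : ℕ × ℕ // P2ok n p}

/-- Validity of a triple index: `1 ≤ i < j < k ≤ n`. -/
abbrev T3ok (n : ℕ) (t : ℕ × ℕ × ℕ) : Prop :=
  1 ≤ t.1 ∧ t.1 < t.2.1 ∧ t.2.1 < t.2.2 ∧ t.2.2 ≤ n

/-- Index type for the generators `a_{ijk}` of `G_n^3`. -/
abbrev TIdx (n : ℕ) := {t : ℕ × ℕ × ℕ // T3ok n t}

def sort2 (a b : ℕ) : ℕ × ℕ := (min a b, max a b)

def sort3 (a b c : ℕ) : ℕ × ℕ × ℕ :=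
  (min a (min b c), a + b + c - min a (min b c) - max a (max b c), max a (max b c))

def pairSet {n : ℕ} (p : PIdx n) : Finset ℕ := {p.1.1, p.1.2}

def tripSet {n : ℕ} (t : TIdx n) : Finset ℕ := {t.1.1, t.1.2.1, t.1.2.2}

/-- Reindexing after deleting the strand `m` : indices above `m` are decreased by one. -/
def del (m x : ℕ) : ℕ := if m < x then x - 1 else x

/-! ## The group `G_n^2` -/

/-- The free-group letter `a_{\{a,b\}}` (trivial if the index is out of range). -/
def fgen2 (n a b : ℕ) : FreeGroup (PIdx n) :=
  if h : P2ok n (sort2 a b) then FreeGroup.of ⟨sort2 a b, h⟩ else 1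

/-- The defining relators of `G_n^2`. -/
def rels2 (n : ℕ) : Set (FreeGroup (PIdx n)) :=
  {r | ∃ a : PIdx n, r = .of a * .of a} ∪
  {r | ∃ i j k l : ℕ,
      1 ≤ i ∧ i ≤ n ∧ 1 ≤ j ∧ j ≤ n ∧ 1 ≤ k ∧ k ≤ n ∧ 1 ≤ l ∧ l ≤ n ∧
      i ≠ j ∧ i ≠ k ∧ i ≠ l ∧ j ≠ k ∧ j ≠ l ∧ k ≠ l ∧
      r = fgen2 n i j * fgen2 n k l * (fgen2 n i j)⁻¹ * (fgen2 n k l)⁻¹} ∪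
  {r | ∃ i j k : ℕ,
      1 ≤ i ∧ i ≤ n ∧ 1 ≤ j ∧ j ≤ n ∧ 1 ≤ k ∧ k ≤ n ∧ i ≠ j ∧ i ≠ k ∧ j ≠ k ∧
      r = fgen2 n i j * fgen2 n i k * fgen2 n j k *
          (fgen2 n j k * fgen2 n i k * fgen2 n i j)⁻¹}

/-- The group `G_n^2`. -/
abbrev G2 (n : ℕ) := PresentedGroup (rels2 n)

/-- The generator `a_{\{a,b\}}` of `G_n^2` (trivial if the index is out of range). -/
def ggen2 (n a b : ℕ) : G2 n :=
  if h : P2ok n (sort2 a b) then PresentedGroup.of ⟨sort2 a b, h⟩ else 1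

/-- The element of `G_n^2` represented by a word in the generators. -/
def toG2 {n : ℕ} (β : List (PIdx n)) : G2 n :=
  (β.map fun a => (PresentedGroup.of a : G2 n)).prod

/-! ## The group `G_n^3` -/

/-- The free-group letter `a_{\{a,b,c\}}` (trivial if the index is out of range). -/
def fgen3 (n a b c : ℕ) : FreeGroup (TIdx n) :=
  if h : T3ok n (sort3 a b c) then FreeGroup.of ⟨sort3 a b c, h⟩ else 1

/-- The defining relators of `G_n^3`. -/
def rels3 (n : ℕ) : Set (FreeGroup (TIdx n)) :=
  {r | ∃ a : TIdx n, r = .of a * .of a} ∪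
  {r | ∃ a b : TIdx n, (tripSet a ∩ tripSet b).card < 2 ∧
      r = .of a * .of b * (.of a)⁻¹ * (.of b)⁻¹} ∪
  {r | ∃ i j k l : ℕ,
      1 ≤ i ∧ i ≤ n ∧ 1 ≤ j ∧ j ≤ n ∧ 1 ≤ k ∧ k ≤ n ∧ 1 ≤ l ∧ l ≤ n ∧
      i ≠ j ∧ i ≠ k ∧ i ≠ l ∧ j ≠ k ∧ j ≠ l ∧ k ≠ l ∧
      r = fgen3 n i j k * fgen3 n i j l * fgen3 n i k l * fgen3 n j k l *
          (fgen3 n j k l * fgen3 n i k l * fgen3 n i j l * fgen3 n i j k)⁻¹}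

/-- The group `G_n^3`. -/
abbrev G3 (n : ℕ) := PresentedGroup (rels3 n)

/-- The generator `a_{\{a,b,c\}}` of `G_n^3` (trivial if the index is out of range). -/
def ggen3 (n a b c : ℕ) : G3 n :=
  if h : T3ok n (sort3 a b c) then PresentedGroup.of ⟨sort3 a b c, h⟩ else 1

/-- The element of `G_n^3` represented by a word in the generators. -/
def toG3 {n : ℕ} (β : List (TIdx n)) : G3 n :=
  (β.map fun a => (PresentedGroup.of a : G3 n)).prod

/-! ## The pure braid group `PB_n` (standard Artin/Birman presentation) -/

/-- The defining relators of the pure braid group on `n` strands, in the standard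
presentation on the generators `b_{ij} = A_{ij}`, `1 ≤ i < j ≤ n`. -/
def relsPB (n : ℕ) : Set (FreeGroup (PIdx n)) :=
  {x | ∃ r s i j : ℕ, P2ok n (r, s) ∧ P2ok n (i, j) ∧ (s < i ∨ (i < r ∧ s < j)) ∧
      x = (fgen2 n r s)⁻¹ * fgen2 n i j * fgen2 n r s * (fgen2 n i j)⁻¹} ∪
  {x | ∃ r s j : ℕ, 1 ≤ r ∧ r < s ∧ s < j ∧ j ≤ n ∧
      x = (fgen2 n r s)⁻¹ * fgen2 n s j * fgen2 n r s *
          (fgen2 n r j * fgen2 n s j * (fgen2 n r j)⁻¹)⁻¹} ∪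
  {x | ∃ r s j : ℕ, 1 ≤ r ∧ r < s ∧ s < j ∧ j ≤ n ∧
      x = (fgen2 n r s)⁻¹ * fgen2 n r j * fgen2 n r s *
          ((fgen2 n r j * fgen2 n s j) * fgen2 n r j * (fgen2 n r j * fgen2 n s j)⁻¹)⁻¹} ∪
  {x | ∃ r i s j : ℕ, 1 ≤ r ∧ r < i ∧ i < s ∧ s < j ∧ j ≤ n ∧
      x = (fgen2 n r s)⁻¹ * fgen2 n i j * fgen2 n r s *
          ((fgen2 n r j * fgen2 n s j * (fgen2 n r j)⁻¹ * (fgen2 n s j)⁻¹) * fgen2 n i j *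
           (fgen2 n r j * fgen2 n s j * (fgen2 n r j)⁻¹ * (fgen2 n s j)⁻¹)⁻¹)⁻¹}

/-- The pure braid group on `n` strands. -/
abbrev PB (n : ℕ) := PresentedGroup (relsPB n)

/-- The standard generator `b_{ij}` of `PB_n` (trivial if the index is out of range). -/
def pbgen (n a b : ℕ) : PB n :=
  if h : P2ok n (sort2 a b) then PresentedGroup.of ⟨sort2 a b, h⟩ else 1

/-! ## The elements `c^n_{i,j}` and the homomorphism `φ_n` -/

/-- `c^n_{i,j} = (∏_{k=j+1}^{n} a_{ijk}) * (∏_{k=1, k∉{i,j}}^{j-1} a_{ijk}) ∈ G_n^3`. -/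
def cElt (n i j : ℕ) : G3 n :=
  (((List.range' (j + 1) (n - j)).map fun k => ggen3 n i j k).prod) *
  (((List.range' 1 (j - 1)).map fun k => ggen3 n i j k).prod)

/-- The image of `b_{ij}` under `φ_n`:
`(c^n_{i,i+1})⁻¹ ⋯ (c^n_{i,j-1})⁻¹ (c^n_{i,j})² c^n_{i,j-1} ⋯ c^n_{i,i+1}`. -/
def phiElt (n i j : ℕ) : G3 n :=
  (((List.range' (i + 1) (j - 1 - i)).map fun m => (cElt n i m)⁻¹).prod) *
  (cElt n i j) ^ 2 *
  (((List.range' (i + 1) (j - 1 - i)).reverse.map fun m => cElt n i m).prod)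

/-- `q` is the strand-deletion homomorphism `q_m : G_n^3 → G_{n-1}^3`. -/
def IsShift3 (n m : ℕ) (q : G3 n →* G3 (n - 1)) : Prop :=
  ∀ i j k : ℕ, 1 ≤ i → i < j → j < k → k ≤ n →
    q (ggen3 n i j k) =
      if m = i ∨ m = j ∨ m = k then 1
      else ggen3 (n - 1) (del m i) (del m j) (del m k)

/-- `p` is the strand-deletion homomorphism `p_m : PB_n → PB_{n-1}`. -/
def IsShiftPB (n m : ℕ) (p : PB n →* PB (n - 1)) : Prop :=
  ∀ i j : ℕ, 1 ≤ i → i < j → j ≤ n →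
    p (pbgen n i j) =
      if m = i ∨ m = j then 1 else pbgen (n - 1) (del m i) (del m j)

/-- `φ` is the Manturov–Nikonov homomorphism `φ_n : PB_n → G_n^3`. -/
def IsPhi (n : ℕ) (φ : PB n →* G3 n) : Prop :=
  ∀ i j : ℕ, 1 ≤ i → i < j → j ≤ n → φ (pbgen n i j) = phiElt n i j

/-! ## Words and good condition -/

def good2 {n : ℕ} (β : List (PIdx n)) : Prop := ∀ a : PIdx n, Even (β.count a)

def good3 {n : ℕ} (β : List (TIdx n)) : Prop := ∀ a : TIdx n, Even (β.count a)

/-! ## Free products of copies of `ℤ/2` -/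

/-- The free product of copies of `ℤ/2ℤ` indexed by `ι`. -/
abbrev FP2 (ι : Type) := PresentedGroup {r : FreeGroup ι | ∃ a : ι, r = .of a * .of a}

/-- Indices `l ∈ {1,…,n} \ {i,j,k}`. -/
abbrev SIdx3 (n i j k : ℕ) := {l : ℕ // (1 ≤ l ∧ l ≤ n) ∧ l ≠ i ∧ l ≠ j ∧ l ≠ k}

/-- The group `F_n^3` (for the fixed triple `(i,j,k)`). -/
abbrev F3 (n i j k : ℕ) := FP2 (SIdx3 n i j k → ZMod 2 × ZMod 2)

/-- Indices `k ∈ {1,…,n} \ {i,j}`. -/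
abbrev SIdx2 (n i j : ℕ) := {l : ℕ // (1 ≤ l ∧ l ≤ n) ∧ l ≠ i ∧ l ≠ j}

/-- The group `F_n^2` (for the fixed pair `(i,j)`). -/
abbrev F2 (n i j : ℕ) := FP2 (SIdx2 n i j → ZMod 2)

/-! ## The MN-invariants `w_{(i,j)}` and `w_{(i,j,k)}` -/

/-- The number of occurrences of the generator `a_{\{a,b\}}` in a word over `G_n^2`. -/
def cnt2 {n : ℕ} (β : List (PIdx n)) (a b : ℕ) : ℕ :=
  (β.filter fun x => decide (pairSet x = ({a, b} : Finset ℕ))).length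

/-- The number of occurrences of the generator `a_{\{a,b,c\}}` in a word over `G_n^3`. -/
def cnt3 {n : ℕ} (β : List (TIdx n)) (a b c : ℕ) : ℕ :=
  (β.filter fun x => decide (tripSet x = ({a, b, c} : Finset ℕ))).length

/-- `i_c` for an occurrence of `a_{ij}` with prefix `pre`: `i_c(k) = N_{ik} + N_{jk} (mod 2)`. -/
def iC2 {n : ℕ} (i j : ℕ) (pre : List (PIdx n)) : SIdx2 n i j → ZMod 2 :=
  fun k => ((cnt2 pre i k.1 + cnt2 pre j k.1 : ℕ) : ZMod 2)

/-- The MN-invariant `w_{(i,j)}` of a word over `G_n^2`. -/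
def w2 {n : ℕ} (i j : ℕ) (β : List (PIdx n)) : F2 n i j :=
  (((β.zipIdx.map Prod.swap).filter fun x => decide (pairSet x.2 = ({i, j} : Finset ℕ))).map
    fun x => (PresentedGroup.of (iC2 i j (β.take x.1)) : F2 n i j)).prod

/-- `i_c` for an occurrence of `a_{ijk}` with prefix `pre`:
`i_c(l) = (N_{jkl} + N_{ijl}, N_{ikl} + N_{ijl}) (mod 2)`. -/
def iC3 {n : ℕ} (i j k : ℕ) (pre : List (TIdx n)) : SIdx3 n i j k → ZMod 2 × ZMod 2 :=
  fun l => (((cnt3 pre j k l.1 + cnt3 pre i j l.1 : ℕ) : ZMod 2),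
            ((cnt3 pre i k l.1 + cnt3 pre i j l.1 : ℕ) : ZMod 2))

/-- The MN-invariant `w_{(i,j,k)}` of a word over `G_n^3`. -/
def w3 {n : ℕ} (i j k : ℕ) (β : List (TIdx n)) : F3 n i j k :=
  (((β.zipIdx.map Prod.swap).filter fun x => decide (tripSet x.2 = ({i, j, k} : Finset ℕ))).map
    fun x => (PresentedGroup.of (iC3 i j k (β.take x.1)) : F3 n i j k)).prod

/-! ## Explicit words for `c^n_{i,j}` and `φ_n(b_{ij})` -/

def tripMkS (n a b c : ℕ) : Option (TIdx n) :=
  if h : T3ok n (sort3 a b c) then some ⟨sort3 a b c, h⟩ else none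

def pairMkS (n a b : ℕ) : Option (PIdx n) :=
  if h : P2ok n (sort2 a b) then some ⟨sort2 a b, h⟩ else none

/-- The defining word of `c^n_{i,j}`. -/
def cWord (n i j : ℕ) : List (TIdx n) :=
  ((List.range' (j + 1) (n - j)).filterMap fun k => tripMkS n i j k) ++
  ((List.range' 1 (j - 1)).filterMap fun k => tripMkS n i j k)

/-- The defining word of `φ_n(b_{ij})`, with the inverses of the `c`-words expanded using
`a⁻¹ = a` for generators (i.e. by reversing the words). -/
def phiWord (n i j : ℕ) : List (TIdx n) :=
  (((List.range' (i + 1) (j - 1 - i)).map fun m => (cWord n i m).reverse).flatten) ++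
  cWord n i j ++ cWord n i j ++
  (((List.range' (i + 1) (j - 1 - i)).reverse.map fun m => cWord n i m).flatten)

/-! ## The group `G_{n,p}^2` (parity) -/

/-- Index type for the generators `a_{ij}^ε` of `G_{n,p}^2`. -/
abbrev PPIdx (n : ℕ) := PIdx n × ZMod 2

def fgenP2 (n a b : ℕ) (e : ZMod 2) : FreeGroup (PPIdx n) :=
  if h : P2ok n (sort2 a b) then FreeGroup.of (⟨sort2 a b, h⟩, e) else 1

/-- The defining relators of `G_{n,p}^2`. -/
def relsP2 (n : ℕ) : Set (FreeGroup (PPIdx n)) :=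
  {r | ∃ a : PPIdx n, r = .of a * .of a} ∪
  {r | ∃ (i j k l : ℕ) (e e' : ZMod 2),
      1 ≤ i ∧ i ≤ n ∧ 1 ≤ j ∧ j ≤ n ∧ 1 ≤ k ∧ k ≤ n ∧ 1 ≤ l ∧ l ≤ n ∧
      i ≠ j ∧ i ≠ k ∧ i ≠ l ∧ j ≠ k ∧ j ≠ l ∧ k ≠ l ∧
      r = fgenP2 n i j e * fgenP2 n k l e' * (fgenP2 n i j e)⁻¹ * (fgenP2 n k l e')⁻¹} ∪
  {r | ∃ (i j k : ℕ) (e1 e2 e3 : ZMod 2),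
      1 ≤ i ∧ i < j ∧ j < k ∧ k ≤ n ∧ e1 + e2 + e3 = 0 ∧
      r = fgenP2 n i j e1 * fgenP2 n i k e2 * fgenP2 n j k e3 *
          (fgenP2 n j k e3 * fgenP2 n i k e2 * fgenP2 n i j e1)⁻¹}

/-- The group `G_{n,p}^2`. -/
abbrev GP2 (n : ℕ) := PresentedGroup (relsP2 n)

/-- The element of `G_{n,p}^2` represented by a word in the generators. -/
def toGP2 {n : ℕ} (β : List (PPIdx n)) : GP2 n :=
  (β.map fun a => (PresentedGroup.of a : GP2 n)).prod

/-! ## The parity invariant `w^p_{ij}` on `G_{n,p}^2` -/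

/-- The number of occurrences of `a_{\{a,b\}}^e` in a word over `G_{n,p}^2`. -/
def cntP2 {n : ℕ} (β : List (PPIdx n)) (a b : ℕ) (e : ZMod 2) : ℕ :=
  (β.filter fun x => decide (pairSet x.1 = ({a, b} : Finset ℕ) ∧ x.2 = e)).length

/-- `i^p_c` for an occurrence of `a_{ij}^e` with prefix `pre`. -/
def iCP2 {n : ℕ} (i j : ℕ) (e : ZMod 2) (pre : List (PPIdx n)) : SIdx2 n i j → ZMod 2 :=
  fun k =>
    if e = 0 then ((cntP2 pre i k.1 0 + cntP2 pre j k.1 0 : ℕ) : ZMod 2)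
    else ((cntP2 pre i k.1 0 + cntP2 pre j k.1 1 : ℕ) : ZMod 2)

/-- The invariant `w^p_{ij}` of a word over `G_{n,p}^2`. -/
def wP2 {n : ℕ} (i j : ℕ) (β : List (PPIdx n)) : F2 n i j :=
  (((β.zipIdx.map Prod.swap).filter fun x => decide (pairSet x.2.1 = ({i, j} : Finset ℕ))).map
    fun x => (PresentedGroup.of (iCP2 i j x.2.2 (β.take x.1)) : F2 n i j)).prod

/-! ## The map `ψ_l : G_{n+1}^2 → G_{n,p}^2` -/

/-- The word over `G_{n,p}^2` obtained from a word over `G_{n+1}^2` by deleting the strand `l`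
and recording parities. -/
def psiWord (n l : ℕ) (β : List (PIdx (n + 1))) : List (PPIdx n) :=
  (β.zipIdx.map Prod.swap).filterMap fun x =>
    if l = x.2.1.1 ∨ l = x.2.1.2 then none
    else (pairMkS n (del l x.2.1.1) (del l x.2.1.2)).map fun p =>
      (p, ((cnt2 (β.take x.1) x.2.1.1 l + cnt2 (β.take x.1) x.2.1.2 l : ℕ) : ZMod 2))

/-! ## The group `G_{n,p}^3` (parity) -/

/-- Index type for the generators `a_{ijk}^ε` of `G_{n,p}^3`. -/
abbrev TPIdx (n : ℕ) := TIdx n × ZMod 2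

def fgenP3 (n a b c : ℕ) (e : ZMod 2) : FreeGroup (TPIdx n) :=
  if h : T3ok n (sort3 a b c) then FreeGroup.of (⟨sort3 a b c, h⟩, e) else 1

/-- The defining relators of `G_{n,p}^3`. -/
def relsP3 (n : ℕ) : Set (FreeGroup (TPIdx n)) :=
  {r | ∃ a : TPIdx n, r = .of a * .of a} ∪
  {r | ∃ a b : TPIdx n, (tripSet a.1 ∩ tripSet b.1).card < 2 ∧
      r = (.of a * .of b) ^ 2} ∪
  {r | ∃ (i j k l : ℕ) (ei ej ek el : ZMod 2),
      1 ≤ i ∧ i ≤ n ∧ 1 ≤ j ∧ j ≤ n ∧ 1 ≤ k ∧ k ≤ n ∧ 1 ≤ l ∧ l ≤ n ∧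
      i ≠ j ∧ i ≠ k ∧ i ≠ l ∧ j ≠ k ∧ j ≠ l ∧ k ≠ l ∧
      (if max (max i j) (max k l) = i then ej + ek + el
       else if max (max i j) (max k l) = j then ei + ek + el
       else if max (max i j) (max k l) = k then ei + ej + el
       else ei + ej + ek) = 0 ∧
      r = (fgenP3 n i j k el * fgenP3 n i j l ek * fgenP3 n i k l ej * fgenP3 n j k l ei) ^ 2}

/-- The group `G_{n,p}^3`. -/
abbrev GP3 (n : ℕ) := PresentedGroup (relsP3 n)

/-- The element of `G_{n,p}^3` represented by a word in the generators. -/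
def toGP3 {n : ℕ} (β : List (TPIdx n)) : GP3 n :=
  (β.map fun a => (PresentedGroup.of a : GP3 n)).prod

/-! ## The map `f : G_{n+1}^3 → G_{n,p}^3` -/

/-- The word over `G_{n,p}^3` obtained from a word over `G_{n+1}^3` by deleting the letters
containing the index `n+1` and recording parities. -/
def fWord (n : ℕ) (β : List (TIdx (n + 1))) : List (TPIdx n) :=
  (β.zipIdx.map Prod.swap).filterMap fun x =>
    if x.2.1.2.2 = n + 1 then none
    else (tripMkS n x.2.1.1 x.2.1.2.1 x.2.1.2.2).map fun t =>
      (t, ((cnt3 (β.take x.1) x.2.1.2.1 x.2.1.2.2 (n + 1) +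
            cnt3 (β.take x.1) x.2.1.1 x.2.1.2.2 (n + 1) : ℕ) : ZMod 2))

/-! ## The parity invariant `w^p_{ijk}` on `G_{n,p}^3` -/

/-- The group `F_n^3` with values in `ℤ/2` (for the parity invariant). -/
abbrev F3p (n i j k : ℕ) := FP2 (SIdx3 n i j k → ZMod 2)

/-- The number of occurrences of `a_{\{a,b,c\}}^e` in a word over `G_{n,p}^3`. -/
def cntP3 {n : ℕ} (β : List (TPIdx n)) (a b c : ℕ) (e : ZMod 2) : ℕ :=
  (β.filter fun x => decide (tripSet x.1 = ({a, b, c} : Finset ℕ) ∧ x.2 = e)).length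

/-- `i^p_c` for an occurrence of `a_{ijk}^e` with prefix `pre` (here `k > i, j`). -/
def iCP3 {n : ℕ} (i j k : ℕ) (e : ZMod 2) (pre : List (TPIdx n)) : SIdx3 n i j k → ZMod 2 :=
  fun l =>
    if e = 0 then
      (if k < l.1 then
        ((cntP3 pre i k l.1 0 + cntP3 pre j k l.1 0 + cntP3 pre i j l.1 1 : ℕ) : ZMod 2)
      else ((cntP3 pre i k l.1 0 + cntP3 pre j k l.1 0 : ℕ) : ZMod 2))
    else
      (if k < l.1 then
        ((cntP3 pre i k l.1 0 + cntP3 pre j k l.1 1 + cntP3 pre i j l.1 0 : ℕ) : ZMod 2)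
      else ((cntP3 pre i k l.1 0 + cntP3 pre j k l.1 1 : ℕ) : ZMod 2))

/-- The invariant `w^p_{ijk}` of a word over `G_{n,p}^3`. -/
def wP3 {n : ℕ} (i j k : ℕ) (β : List (TPIdx n)) : F3p n i j k :=
  (((β.zipIdx.map Prod.swap).filter fun x => decide (tripSet x.2.1 = ({i, j, k} : Finset ℕ))).map
    fun x => (PresentedGroup.of (iCP3 i j k x.2.2 (β.take x.1)) : F3p n i j k)).prod


/-!
The invariant is read off from a homomorphism of `G_{n,p}^2` into a semidirect product `W ⋊ A`.
Here `A = (ℤ/2)^{letters}` records the parities `N^δ_{st} mod 2` of the letters read so far, `W` is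
the free product of copies of `ℤ/2` on pairs `(ε, v)`, and a state `x ∈ A` acts on `W` by
`(ε, v) ↦ (ε, v + i(x, ε))` with `i(x, ε)(k) = x(a_{ik}^0) + x(a_{jk}^ε)`. Sending `a_{st}^δ` to
`(⟨(δ, 0)⟩, e_{a_{st}^δ})` if `{s, t} = {i, j}` and to `(1, e_{a_{st}^δ})` otherwise, the
`W`-component of the image of a word `β` is `∏_c ⟨(ε_c, i^p_c)⟩`, which is `w^p_{ij}(β)` once `ε` is
forgotten. The defining relators die in `W ⋊ A`: squares and commutators because a letter meeting
`{i, j}` in zero or two indices does not move `⟨(ε, 0)⟩`, and the triangle relators because the two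
letters `a_{im}^{ε'}`, `a_{jm}^{ε''}` accompanying `a_{ij}^ε` together shift the `m`-th coordinate
by `[ε' = 0] + [ε'' = ε]`, which vanishes since `ε + ε' + ε'' = 0`.
-/

open SemidirectProduct

section FreeProductOfInvolutions

variable {ι κ μ : Type}

theorem FP2.of_mul_self (a : ι) : (PresentedGroup.of a : FP2 ι) * PresentedGroup.of a = 1 :=
  PresentedGroup.one_of_mem ⟨a, rfl⟩

def FP2.map (f : ι → κ) : FP2 ι →* FP2 κ :=
  PresentedGroup.toGroup (f := fun a => PresentedGroup.of (f a)) <| by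
    rintro _ ⟨a, rfl⟩
    simpa using FP2.of_mul_self (f a)

@[simp]
theorem FP2.map_of (f : ι → κ) (a : ι) :
    FP2.map f (PresentedGroup.of a) = PresentedGroup.of (f a) :=
  PresentedGroup.toGroup.of _

theorem FP2.map_id : FP2.map (id : ι → ι) = MonoidHom.id _ :=
  PresentedGroup.ext fun _ => by simp

theorem FP2.map_comp (g : κ → μ) (f : ι → κ) :
    (FP2.map g).comp (FP2.map f) = FP2.map (g ∘ f) :=
  PresentedGroup.ext fun _ => by simp

def FP2.permAut : Equiv.Perm ι →* MulAut (FP2 ι) where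
  toFun σ := MonoidHom.toMulEquiv (FP2.map σ) (FP2.map σ.symm)
    (by rw [FP2.map_comp, Equiv.symm_comp_self, FP2.map_id])
    (by rw [FP2.map_comp, Equiv.self_comp_symm, FP2.map_id])
  map_one' := MulEquiv.ext fun x => DFunLike.congr_fun FP2.map_id x
  map_mul' σ τ := MulEquiv.ext fun x => (DFunLike.congr_fun (FP2.map_comp σ τ) x).symm

@[simp]
theorem FP2.permAut_of (σ : Equiv.Perm ι) (a : ι) :
    FP2.permAut σ (PresentedGroup.of a) = PresentedGroup.of (σ a) :=
  FP2.map_of σ a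

end FreeProductOfInvolutions

def shearPerm {A B C : Type*} [AddMonoid A] [AddCommGroup B] (σ : A →+ C → B) :
    Multiplicative A →* Equiv.Perm (C × B) where
  toFun a := Equiv.prodShear (Equiv.refl C) fun c => Equiv.addRight (σ a.toAdd c)
  map_one' := by ext ⟨c, b⟩ <;> simp
  map_mul' a a' := by ext ⟨c, b⟩ <;> simp [add_comm, add_left_comm]

section ReversibleTriples

variable {G : Type*} [Group G] {w a b c : G}

theorem mul_mul_eq_rev_of_commute_head (hab : Commute a b) (hac : Commute a c)
    (hbc : Commute b c) (hw : Commute w (b * c)) : w * a * b * c = c * b * (w * a) :=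
  calc w * a * b * c = w * (a * (b * c)) := by simp only [mul_assoc]
    _ = w * (b * c) * a := by rw [(hab.mul_right hac).eq]; simp only [mul_assoc]
    _ = c * b * (w * a) := by rw [hw.eq, hbc.eq]; simp only [mul_assoc]

theorem mul_mul_eq_rev_of_commute_middle (hb : b * b = 1) (hab : Commute a b)
    (hac : Commute a c) (hbc : Commute b c) (hw : Commute w (b * c)) :
    b * (w * a) * c = c * (w * a) * b := by
  have key : b * w * c = c * w * b :=
    calc b * w * c = b * w * c * (b * b) := by rw [hb, mul_one]
      _ = b * (w * (b * c)) * b := by rw [hbc.eq]; simp only [mul_assoc]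
      _ = b * (b * c * w) * b := by rw [hw.eq]
      _ = c * w * b := by simp only [← mul_assoc, hb, one_mul]
  calc b * (w * a) * c = b * w * c * a := by simp only [mul_assoc, hac.eq]
    _ = c * w * b * a := by rw [key]
    _ = c * (w * a) * b := by simp only [mul_assoc, hab.eq]

end ReversibleTriples

theorem Finset.pair_eq_pair_iff {α : Type*} [DecidableEq α] {x y z w : α} :
    ({x, y} : Finset α) = {z, w} ↔ x = z ∧ y = w ∨ x = w ∧ y = z := by
  rw [← Finset.coe_inj, Finset.coe_pair, Finset.coe_pair, Set.pair_eq_pair_iff]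

theorem pairSet_sort2 {n a b : ℕ} (h : P2ok n (sort2 a b)) :
    pairSet (⟨sort2 a b, h⟩ : PIdx n) = {a, b} := by
  rcases le_total a b with hab | hab
  · simp [pairSet, sort2, hab]
  · simp [pairSet, sort2, hab, Finset.pair_comm]

/-- The letter `a_{st}^δ` is indexed by `({s, t}, δ)`; a state records the parity of each
`N^δ_{st}`. -/
abbrev ParityState := Finset ℕ × ZMod 2 → ZMod 2

def letterClass {n : ℕ} (a : PPIdx n) : Finset ℕ × ZMod 2 := (pairSet a.1, a.2)

def parityState {n : ℕ} (β : List (PPIdx n)) : ParityState :=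
  (β.map fun a => Pi.single (letterClass a) 1).sum

theorem parityState_apply {n : ℕ} (β : List (PPIdx n)) (a b : ℕ) (ε : ZMod 2) :
    parityState β ({a, b}, ε) = cntP2 β a b ε := by
  induction β with
  | nil => simp [parityState, cntP2]
  | cons x β ih =>
    have hx : (Pi.single (letterClass x) 1 : ParityState) ({a, b}, ε) =
        if pairSet x.1 = {a, b} ∧ x.2 = ε then 1 else 0 := by
      simp only [Pi.single_apply, letterClass, Prod.ext_iff, eq_comm]
    simp only [parityState, cntP2] at ih ⊢
    rw [List.map_cons, List.sum_cons, Pi.add_apply, ih, hx, List.filter_cons]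
    by_cases h : pairSet x.1 = {a, b} ∧ x.2 = ε <;> simp [h, add_comm]

def indexOfState (i j n : ℕ) : ParityState →+ ZMod 2 → SIdx2 n i j → ZMod 2 where
  toFun s e k := s ({i, k.1}, 0) + s ({j, k.1}, e)
  map_zero' := rfl
  map_add' s t := by ext; simp only [Pi.add_apply]; abel

theorem indexOfState_parityState {n : ℕ} (i j : ℕ) (β : List (PPIdx n)) (e : ZMod 2) :
    indexOfState i j n (parityState β) e = iCP2 i j e β := by
  ext k
  rcases (by decide : ∀ e : ZMod 2, e = 0 ∨ e = 1) e with rfl | rfl <;>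
    simp [indexOfState, iCP2, parityState_apply]

section IndexOfState

variable {i j n : ℕ}

theorem indexOfState_single_pair_self (ε e : ZMod 2) :
    indexOfState i j n (Pi.single ({i, j}, ε) 1) e = 0 := by
  ext ⟨k, -, hki, hkj⟩
  simp [indexOfState, Finset.pair_eq_pair_iff, hki, hkj]

theorem indexOfState_single_of_notMem {P : Finset ℕ} (hi : i ∉ P) (hj : j ∉ P)
    (ε e : ZMod 2) : indexOfState i j n (Pi.single (P, ε) 1) e = 0 := by
  ext k
  have hiP : ({i, k.1} : Finset ℕ) ≠ P := fun h => hi (h ▸ by simp)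
  have hjP : ({j, k.1} : Finset ℕ) ≠ P := fun h => hj (h ▸ by simp)
  simp [indexOfState, hiP, hjP]

theorem indexOfState_single_add_single {x y m : ℕ} (hxy : ({x, y} : Finset ℕ) = {i, j})
    (hne : x ≠ y) (hmx : m ≠ x) (hmy : m ≠ y) {e ε ε' : ZMod 2} (h : e + ε + ε' = 0) :
    indexOfState i j n (Pi.single ({x, m}, ε) 1 + Pi.single ({y, m}, ε') 1) e = 0 := by
  ext ⟨k, -, hki, hkj⟩
  rcases Finset.pair_eq_pair_iff.mp hxy with ⟨rfl, rfl⟩ | ⟨rfl, rfl⟩ <;>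
  · by_cases hkm : k = m
    · subst hkm
      simp [indexOfState, Pi.single_apply, Finset.pair_eq_pair_iff, hne, hne.symm, hki, hkj]
      revert e ε ε'
      decide
    · simp [indexOfState, Finset.pair_eq_pair_iff, hne, hne.symm, hki, hkj, hkm]

end IndexOfState

abbrev LetterGroup (n i j : ℕ) := FP2 (ZMod 2 × (SIdx2 n i j → ZMod 2))

def stateAction (n i j : ℕ) : Multiplicative ParityState →* MulAut (LetterGroup n i j) :=
  FP2.permAut.comp (shearPerm (indexOfState i j n))

abbrev InvariantGroup (n i j : ℕ) :=
  LetterGroup n i j ⋊[stateAction n i j] Multiplicative ParityState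

theorem stateAction_of {n i j : ℕ} (s : ParityState) (e : ZMod 2) (f : SIdx2 n i j → ZMod 2) :
    stateAction n i j (.ofAdd s) (.of (e, f)) = .of (e, f + indexOfState i j n s e) :=
  FP2.permAut_of _ _

def letterPart {n : ℕ} (i j : ℕ) (q : Finset ℕ × ZMod 2) : LetterGroup n i j :=
  if q.1 = {i, j} then .of (q.2, 0) else 1

def letterImage {n : ℕ} (i j : ℕ) (q : Finset ℕ × ZMod 2) : InvariantGroup n i j :=
  inl (letterPart i j q) * inr (.ofAdd (Pi.single q 1))

section LetterImage

variable {n i j : ℕ}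

theorem letterPart_of_ne {q : Finset ℕ × ZMod 2} (h : q.1 ≠ {i, j}) :
    letterPart (n := n) i j q = 1 :=
  if_neg h

theorem letterPart_mul_self (q : Finset ℕ × ZMod 2) :
    letterPart (n := n) i j q * letterPart i j q = 1 := by
  unfold letterPart
  split_ifs
  exacts [FP2.of_mul_self _, mul_one 1]

theorem commute_inl_of_inr {e : ZMod 2} {s : ParityState} (h : indexOfState i j n s e = 0) :
    Commute (inl (.of (e, 0)) : InvariantGroup n i j) (inr (.ofAdd s)) := by
  ext <;> simp [stateAction_of, h]

theorem commute_inl_letterPart_inr {q : Finset ℕ × ZMod 2} {s : ParityState}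
    (h : q.1 = {i, j} → indexOfState i j n s q.2 = 0) :
    Commute (inl (letterPart i j q) : InvariantGroup n i j) (inr (.ofAdd s)) := by
  unfold letterPart
  split_ifs with hq
  · exact commute_inl_of_inr (h hq)
  · simp

theorem commute_inr_inr (s t : Multiplicative ParityState) :
    Commute (inr s : InvariantGroup n i j) (inr t) :=
  (Commute.all s t).map inr

theorem inr_mul_self (s : ParityState) :
    (inr (.ofAdd s) : InvariantGroup n i j) * inr (.ofAdd s) = 1 := by
  rw [← map_mul, ← ofAdd_add, ZModModule.add_self, ofAdd_zero, map_one]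

theorem letterImage_of_eq {q : Finset ℕ × ZMod 2} (h : q.1 = {i, j}) :
    letterImage (n := n) i j q = inl (.of (q.2, 0)) * inr (.ofAdd (Pi.single q 1)) := by
  rw [letterImage, letterPart, if_pos h]

theorem letterImage_of_ne {q : Finset ℕ × ZMod 2} (h : q.1 ≠ {i, j}) :
    letterImage (n := n) i j q = inr (.ofAdd (Pi.single q 1)) := by
  rw [letterImage, letterPart_of_ne h, map_one, one_mul]

theorem letterImage_mul_self (q : Finset ℕ × ZMod 2) :
    letterImage (n := n) i j q * letterImage i j q = 1 := by
  have hc : Commute (inl (letterPart i j q) : InvariantGroup n i j)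
      (inr (.ofAdd (Pi.single q 1))) :=
    commute_inl_letterPart_inr fun hq => by
      rw [show q = ({i, j}, q.2) from Prod.ext hq rfl]
      exact indexOfState_single_pair_self _ _
  rw [← sq, letterImage, hc.mul_pow, sq, sq, ← map_mul, letterPart_mul_self, map_one, one_mul,
    inr_mul_self]

theorem letterImage_commute {P Q : Finset ℕ} (hPQ : Disjoint P Q) (e e' : ZMod 2) :
    Commute (letterImage (n := n) i j (P, e)) (letterImage i j (Q, e')) := by
  have hvanish : ∀ {R S : Finset ℕ}, Disjoint R S → ∀ ε ε' : ZMod 2, R = {i, j} →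
      indexOfState i j n (Pi.single (S, ε') 1) ε = 0 := fun hRS _ _ hR =>
    indexOfState_single_of_notMem (Finset.disjoint_left.mp hRS (by simp [hR]))
      (Finset.disjoint_left.mp hRS (by simp [hR])) _ _
  have hparts : Commute (inl (letterPart i j (P, e)) : InvariantGroup n i j)
      (inl (letterPart i j (Q, e'))) := by
    by_cases hP : P = {i, j}
    · have hQ : Q ≠ {i, j} := fun hQ => by simp [hP, hQ] at hPQ
      rw [letterPart_of_ne (q := (Q, e')) hQ, map_one]
      exact Commute.one_right _
    · rw [letterPart_of_ne hP, map_one]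
      exact Commute.one_left _
  exact (hparts.mul_right (commute_inl_letterPart_inr (hvanish hPQ e e'))).mul_left
    ((commute_inl_letterPart_inr (hvanish hPQ.symm e' e)).symm.mul_right (commute_inr_inr _ _))

theorem letterImage_triangle {a b c : ℕ} (hab : a ≠ b) (hac : a ≠ c) (hbc : b ≠ c)
    {e₁ e₂ e₃ : ZMod 2} (h : e₁ + e₂ + e₃ = 0) :
    letterImage (n := n) i j ({a, b}, e₁) * letterImage i j ({a, c}, e₂) *
        letterImage i j ({b, c}, e₃) =
      letterImage i j ({b, c}, e₃) * letterImage i j ({a, c}, e₂) *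
        letterImage i j ({a, b}, e₁) := by
  have pair_ne : ∀ {x y z w : ℕ}, ¬(x = z ∧ y = w ∨ x = w ∧ y = z) →
      ({x, y} : Finset ℕ) ≠ {z, w} := fun h => mt Finset.pair_eq_pair_iff.mp h
  have hfix : ∀ {x y m : ℕ} {e ε ε' : ZMod 2}, ({x, y} : Finset ℕ) = {i, j} → x ≠ y → m ≠ x →
      m ≠ y → e + ε + ε' = 0 → Commute (inl (.of (e, 0)) : InvariantGroup n i j)
        (inr (.ofAdd (Pi.single ({x, m}, ε) 1)) * inr (.ofAdd (Pi.single ({y, m}, ε') 1))) :=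
    fun hxy hne hmx hmy h => by
      rw [← map_mul, ← ofAdd_add]
      exact commute_inl_of_inr (indexOfState_single_add_single hxy hne hmx hmy h)
  by_cases h₁ : ({a, b} : Finset ℕ) = {i, j}
  · rw [letterImage_of_eq h₁,
      letterImage_of_ne (q := ({a, c}, e₂)) (by rw [← h₁]; exact pair_ne (by omega)),
      letterImage_of_ne (q := ({b, c}, e₃)) (by rw [← h₁]; exact pair_ne (by omega))]
    exact mul_mul_eq_rev_of_commute_head (commute_inr_inr _ _) (commute_inr_inr _ _)
      (commute_inr_inr _ _) (hfix h₁ hab hac.symm hbc.symm h)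
  by_cases h₂ : ({a, c} : Finset ℕ) = {i, j}
  · rw [letterImage_of_eq (q := ({a, c}, e₂)) h₂, letterImage_of_ne h₁,
      letterImage_of_ne (q := ({b, c}, e₃)) (by rw [← h₂]; exact pair_ne (by omega))]
    refine mul_mul_eq_rev_of_commute_middle (inr_mul_self _) (commute_inr_inr _ _)
      (commute_inr_inr _ _) (commute_inr_inr _ _) ?_
    rw [Finset.pair_comm b c]
    exact hfix h₂ hac hab.symm hbc (by rw [← h]; ring)
  by_cases h₃ : ({b, c} : Finset ℕ) = {i, j}
  · rw [letterImage_of_eq (q := ({b, c}, e₃)) h₃, letterImage_of_ne h₁, letterImage_of_ne h₂]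
    refine (mul_mul_eq_rev_of_commute_head (commute_inr_inr _ _) (commute_inr_inr _ _)
      (commute_inr_inr _ _) ?_).symm
    rw [Finset.pair_comm a c, Finset.pair_comm a b]
    exact hfix (by rw [Finset.pair_comm, h₃]) hbc.symm hac hab (by rw [← h]; ring)
  rw [letterImage_of_ne h₁, letterImage_of_ne h₂, letterImage_of_ne h₃]
  simp only [← map_mul inr, mul_comm, mul_left_comm]

end LetterImage

theorem lift_letterImage_fgenP2 {n a b : ℕ} (i j : ℕ) (h : P2ok n (sort2 a b)) (e : ZMod 2) :
    FreeGroup.lift (fun x : PPIdx n => letterImage (n := n) i j (letterClass x))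
      (fgenP2 n a b e) = letterImage i j ({a, b}, e) := by
  rw [fgenP2, dif_pos h, FreeGroup.lift_apply_of, letterClass, pairSet_sort2]

theorem lift_letterImage_relsP2 {n : ℕ} (i j : ℕ) : ∀ r ∈ relsP2 n,
    FreeGroup.lift (fun x : PPIdx n => letterImage (n := n) i j (letterClass x)) r = 1 := by
  rintro r ((⟨x, rfl⟩ | ⟨a, b, c, d, e, e', ha, han, hb, hbn, hc, hcn, hd, hdn,
      hab, hac, had, hbc, hbd, hcd, rfl⟩) | ⟨a, b, c, e₁, e₂, e₃, ha, hab, hbc, hcn, he, rfl⟩)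
  · simpa using letterImage_mul_self _
  · have hdisj : Disjoint ({a, b} : Finset ℕ) {c, d} := by simp; omega
    rw [map_mul, map_mul, map_mul, map_inv, map_inv,
      lift_letterImage_fgenP2 (a := a) (b := b) i j (by simp only [P2ok, sort2]; omega),
      lift_letterImage_fgenP2 (a := c) (b := d) i j (by simp only [P2ok, sort2]; omega),
      (letterImage_commute hdisj e e').eq]
    group
  · rw [map_mul, map_mul, map_mul, map_inv, map_mul, map_mul,
      lift_letterImage_fgenP2 (a := a) (b := b) i j (by simp only [P2ok, sort2]; omega),
      lift_letterImage_fgenP2 (a := a) (b := c) i j (by simp only [P2ok, sort2]; omega),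
      lift_letterImage_fgenP2 (a := b) (b := c) i j (by simp only [P2ok, sort2]; omega)]
    exact mul_inv_eq_one.mpr (letterImage_triangle hab.ne (hab.trans hbc).ne hbc.ne he)

def invariantHom (n i j : ℕ) : GP2 n →* InvariantGroup n i j :=
  PresentedGroup.toGroup (lift_letterImage_relsP2 i j)

def forgetParity {n : ℕ} (i j : ℕ) : LetterGroup n i j →* F2 n i j := FP2.map Prod.snd

theorem wP2_append_singleton {n : ℕ} (i j : ℕ) (β : List (PPIdx n)) (a : PPIdx n) :
    wP2 i j (β ++ [a]) =
      wP2 i j β * if pairSet a.1 = {i, j} then .of (iCP2 i j a.2 β) else 1 := by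
  have hprefix : ∀ x ∈ (β.zipIdx.map Prod.swap).filter
      (fun x => decide (pairSet x.2.1 = ({i, j} : Finset ℕ))),
      (PresentedGroup.of (iCP2 i j x.2.2 ((β ++ [a]).take x.1)) : F2 n i j) =
        .of (iCP2 i j x.2.2 (β.take x.1)) := by
    rintro ⟨k, b⟩ hx
    obtain ⟨⟨b', k'⟩, hk, hswap⟩ := List.mem_map.mp (List.mem_filter.mp hx).1
    obtain ⟨rfl, rfl⟩ := Prod.mk.inj hswap
    have hlt : k' < β.length := by simpa using (List.mem_zipIdx hk).2.1
    rw [List.take_append_of_le_length hlt.le]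
  unfold wP2
  rw [List.zipIdx_append, List.map_append, List.filter_append, List.map_append,
    List.prod_append, List.map_congr_left hprefix]
  by_cases ha : pairSet a.1 = {i, j} <;> simp [ha]

theorem prod_letterImage_right {n : ℕ} (i j : ℕ) (β : List (PPIdx n)) :
    (β.map fun a => letterImage (n := n) i j (letterClass a)).prod.right =
      .ofAdd (parityState β) := by
  rw [← rightHom_eq_right, map_list_prod, parityState, ofAdd_list_prod, List.map_map,
    List.map_map]
  simp [Function.comp_def, letterImage]

theorem wP2_eq_forgetParity {n : ℕ} (i j : ℕ) (β : List (PPIdx n)) :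
    wP2 i j β = forgetParity i j (β.map fun a => letterImage i j (letterClass a)).prod.left := by
  induction β using List.reverseRecOn with
  | nil => simp [wP2]
  | append_singleton β a ih =>
    rw [wP2_append_singleton, ih, List.map_append, List.prod_append, mul_left, map_mul,
      prod_letterImage_right]
    congr 1
    by_cases ha : pairSet a.1 = {i, j}
    · simp [ha, letterImage, letterPart, letterClass, stateAction_of, forgetParity,
        indexOfState_parityState]
    · simp [ha, letterImage, letterPart, letterClass]

theorem wP2_eq_forgetParity_invariantHom {n : ℕ} (i j : ℕ) (β : List (PPIdx n)) :
    wP2 i j β = forgetParity i j (invariantHom n i j (toGP2 β)).left := by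
  rw [wP2_eq_forgetParity, toGP2, map_list_prod, List.map_map]
  refine congrArg (fun l : List (InvariantGroup n i j) => forgetParity i j l.prod.left)
    (List.map_congr_left fun x _ => ?_)
  exact (PresentedGroup.toGroup.of (lift_letterImage_relsP2 i j)).symm

theorem statement_10_general (n i j : ℕ)
    (β β' : List (PPIdx n)) (h : toGP2 β = toGP2 β') :
    wP2 i j β = wP2 i j β' := by
  rw [wP2_eq_forgetParity_invariantHom, wP2_eq_forgetParity_invariantHom, h]

theorem statement_10 (n i j : ℕ) (hn : 3 ≤ n)
    (hi : 1 ≤ i) (hij : i < j) (hj : j ≤ n)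
    (β β' : List (PPIdx n)) (h : toGP2 β = toGP2 β') :
    wP2 i j β = wP2 i j β' :=
  statement_10_general n i j β β' h

end GnkBrunnian
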